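/- Let a₁, a₂, w_{V,1}, w_{H,1} ∈ ℂ all have unit modulus, and define w_{V,2} = −conj(w_{H,1}) and w_{H,2} = conj(w_{V,1}). Then |w_{V,1} a₁ + w_{V,2} a₂|² + |w_{H,1} a₁ + w_{H,2} a₂|² = 4. -/

import Mathlib

open ComplexConjugate

/-- The columns of the Alamouti matrix `!![w₁, -conj w₂; w₂, conj w₁]` are orthogonal, so the
cross terms of the two squared moduli cancel. -/
theorem Complex.norm_sq_alamouti (w₁ w₂ a₁ a₂ : ℂ) :
    ‖w₁ * a₁ + -conj w₂ * a₂‖ ^ 2 + ‖w₂ * a₁ + conj w₁ * a₂‖ ^ 2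
      = (‖w₁‖ ^ 2 + ‖w₂‖ ^ 2) * (‖a₁‖ ^ 2 + ‖a₂‖ ^ 2) := by
  simp only [← Complex.normSq_eq_norm_sq, Complex.normSq_add,
    Complex.normSq_neg, Complex.normSq_conj, map_mul, map_neg, Complex.mul_re, Complex.neg_re,
    Complex.neg_im, Complex.conj_re, Complex.conj_im, Complex.mul_im]
  ring

/-- Girnyk–Petersson phase-only dual-polarized beamformer for two antennas:
with unit-modulus steering entries `a₁, a₂` and unit-modulus coefficients
`w_{V,1}, w_{H,1}`, setting `w_{V,2} = −conj(w_{H,1})` and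
`w_{H,2} = conj(w_{V,1})` yields the isotropic total radiated power
`|w_{V,1}a₁ + w_{V,2}a₂|² + |w_{H,1}a₁ + w_{H,2}a₂|² = 4`. -/
theorem two_antenna_dual_polarized_broad_beam
    (a₁ a₂ wV1 wH1 : ℂ)
    (ha₁ : ‖a₁‖ = 1) (ha₂ : ‖a₂‖ = 1)
    (hwV1 : ‖wV1‖ = 1) (hwH1 : ‖wH1‖ = 1)
    (wV2 wH2 : ℂ)
    (hwV2 : wV2 = -(starRingEnd ℂ) wH1) (hwH2 : wH2 = (starRingEnd ℂ) wV1) :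
    ‖wV1 * a₁ + wV2 * a₂‖ ^ 2
      + ‖wH1 * a₁ + wH2 * a₂‖ ^ 2 = 4 := by
  subst hwV2 hwH2
  rw [Complex.norm_sq_alamouti, ha₁, ha₂, hwV1, hwH1]
  norm_num
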